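/- Let L_n^{(β)} be the Laguerre-type polynomials orthogonal on (0,∞) with weight t^{β−1} e^{−t} (β > 0) normalized to have leading coefficient 1/n!. For nonnegative integers x ≠ y and any r > 0, ∫_r^∞ L_x^{(β)}(t) L_y^{(β)}(t) t^{β−1} e^{−t} dt = r^β e^{−r} (L_{x−1}^{(β+1)}(r) L_y^{(β)}(r) − L_x^{(β)}(r) L_{y−1}^{(β+1)}(r)) / (x − y), with the convention L_{−1}^{(β+1)} = 0. -/

import Mathlib

/-!
With `lagShift β n = L_{n-1}^{(β+1)}` the derivative of `L_n^{(β)}`, the Laguerre equation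
`t L_n'' + (β - t) L_n' + n L_n = 0` says `d/dt (-L_n' t^β e^{-t}) = n L_n t^{β-1} e^{-t}`. Hence the
weighted Wronskian `(L_x L_y' - L_x' L_y) t^β e^{-t}` has derivative `(x - y) L_x L_y t^{β-1} e^{-t}`;
it tends to `0` at infinity because the `L_n` grow polynomially, and the fundamental theorem of
calculus on `(r, ∞)` gives the tail integral. Both the derivative formula and the differential
equation come from the contiguous relations `L_{n+1}^{(β)} = L_{n+1}^{(β+1)} + L_n^{(β+1)}` and
`t L_n^{(β+1)} = (n+1) L_{n+1}^{(β)} + (n+β) L_n^{(β)}`, proved by induction from the recurrence.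
-/

/-- The Laguerre-type polynomials `L_n^{(β)}` (orthogonal on `(0,∞)` with weight
`t^{β−1}e^{−t}`, leading coefficient `1/n!`), defined via the three-term relation
`t L_x = (x+1)L_{x+1} + (2x+β)L_x + (x+β−1)L_{x−1}`, with `L_0 = 1`, `L_1(t) = t − β`. -/
noncomputable def lagP (β : ℝ) : ℕ → ℝ → ℝ
  | 0, _ => 1
  | 1, t => t - β
  | n + 2, t =>
      ((t - (2 * ((n : ℝ) + 1) + β)) * lagP β (n + 1) t
        - ((n : ℝ) + 1 + β - 1) * lagP β n t) / ((n : ℝ) + 2)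

open Real Asymptotics Filter Set MeasureTheory

lemma lagP_add_two (β : ℝ) (n : ℕ) (t : ℝ) :
    ((n : ℝ) + 2) * lagP β (n + 2) t
      = (t - (2 * n + 2 + β)) * lagP β (n + 1) t - (n + β) * lagP β n t := by
  rw [lagP]
  field_simp
  ring

lemma lagP_succ_eq_add (β : ℝ) (n : ℕ) (t : ℝ) :
    lagP β (n + 1) t = lagP (β + 1) (n + 1) t + lagP (β + 1) n t := by
  induction n using Nat.twoStepInduction with
  | zero => simp [lagP]; ring
  | one =>
    have h₀ := lagP_add_two β 0 t
    have h₁ := lagP_add_two (β + 1) 0 t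
    simp only [lagP, Nat.cast_zero] at h₀ h₁ ⊢
    linear_combination (h₀ - h₁) / 2
  | more n ih₀ ih₁ =>
    have r := lagP_add_two β (n + 1) t
    have r₀ := lagP_add_two (β + 1) n t
    have r₁ := lagP_add_two (β + 1) (n + 1) t
    simp only [add_assoc, Nat.reduceAdd, Nat.cast_add, Nat.cast_one] at *
    apply mul_left_cancel₀ (show (n : ℝ) + 3 ≠ 0 by positivity)
    linear_combination r - r₁ - r₀ + (t - (2 * n + 4 + β)) * ih₁ - (n + 1 + β) * ih₀

lemma mul_lagP_add_one (β : ℝ) (n : ℕ) (t : ℝ) :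
    t * lagP (β + 1) n t = (n + 1) * lagP β (n + 1) t + (n + β) * lagP β n t := by
  induction n using Nat.twoStepInduction with
  | zero => simp [lagP]
  | one =>
    have h := lagP_add_two β 0 t
    simp only [lagP, Nat.cast_zero] at h ⊢
    linear_combination -h
  | more n ih₀ ih₁ =>
    have r := lagP_add_two β (n + 1) t
    have r' := lagP_add_two β n t
    have r₀ := lagP_add_two (β + 1) n t
    simp only [add_assoc, Nat.reduceAdd, Nat.cast_add, Nat.cast_one] at *
    apply mul_left_cancel₀ (show (n : ℝ) + 2 ≠ 0 by positivity)
    linear_combination t * r₀ + (t - (2 * n + 3 + β)) * ih₁ - (n + 1 + β) * ih₀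
      - (n + 2) * r - (n + 1 + β) * r'

noncomputable def lagShift (β : ℝ) (n : ℕ) (t : ℝ) : ℝ :=
  if n = 0 then 0 else lagP (β + 1) (n - 1) t

@[simp] lemma lagShift_zero (β : ℝ) : lagShift β 0 = 0 := by
  ext t; simp [lagShift]

@[simp] lemma lagShift_succ (β : ℝ) (n : ℕ) : lagShift β (n + 1) = lagP (β + 1) n := by
  ext t; simp [lagShift]

/-- The Laguerre equation `t y'' + (β - t) y' + n y = 0` for `y = L_n^{(β)}`. -/
lemma lagP_ode (β : ℝ) (n : ℕ) (t : ℝ) :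
    t * lagShift (β + 1) (n - 1) t + (β - t) * lagShift β n t + n * lagP β n t = 0 := by
  match n with
  | 0 => simp
  | 1 => simp [lagP]
  | m + 2 =>
    simp only [Nat.add_succ_sub_one, lagShift_succ]
    have b := mul_lagP_add_one β (m + 1) t
    have b' := mul_lagP_add_one (β + 1) m t
    have a := lagP_succ_eq_add β m t
    push_cast at *
    linear_combination b' - b - (m + 1 + β) * a

/-- The derivative of the three-term recurrence. -/
lemma lagShift_add_two (β : ℝ) (n : ℕ) (t : ℝ) :
    ((n : ℝ) + 2) * lagShift β (n + 2) t = lagP β (n + 1) t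
      + (t - (2 * n + 2 + β)) * lagShift β (n + 1) t - (n + β) * lagShift β n t := by
  match n with
  | 0 => simp [lagP]; ring
  | m + 1 =>
    simp only [lagShift_succ]
    have r := lagP_add_two (β + 1) m t
    have a := lagP_succ_eq_add β (m + 1) t
    push_cast at *
    linear_combination r - a

lemma hasDerivAt_lagP (β : ℝ) (n : ℕ) (t : ℝ) :
    HasDerivAt (lagP β n) (lagShift β n t) t := by
  induction n using Nat.twoStepInduction generalizing t with
  | zero => rw [lagShift_zero]; exact hasDerivAt_const t 1
  | one => simpa [lagP] using (hasDerivAt_id t).sub_const β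
  | more n ih₀ ih₁ =>
    have h := ((((hasDerivAt_id t).sub_const (2 * ((n : ℝ) + 1) + β)).mul (ih₁ t)).sub
      ((ih₀ t).const_mul ((n : ℝ) + 1 + β - 1))).div_const ((n : ℝ) + 2)
    refine h.congr_deriv ?_
    rw [div_eq_iff (by positivity), mul_comm (lagShift β (n + 2) t), lagShift_add_two]
    simp only [lagShift_succ, id]
    ring

lemma hasDerivAt_lagShift (β : ℝ) (n : ℕ) (t : ℝ) :
    HasDerivAt (lagShift β n) (lagShift (β + 1) (n - 1) t) t := by
  cases n with
  | zero => simp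
  | succ n => simpa using hasDerivAt_lagP (β + 1) n t

@[fun_prop]
lemma continuous_lagP (β : ℝ) (n : ℕ) : Continuous (lagP β n) :=
  continuous_iff_continuousAt.2 fun t => (hasDerivAt_lagP β n t).continuousAt

lemma hasDerivAt_lagShift_mul_rpow_mul_exp (β : ℝ) (n : ℕ) {t : ℝ} (ht : 0 < t) :
    HasDerivAt (fun s => lagShift β n s * s ^ β * exp (-s))
      (-(n * lagP β n t * t ^ (β - 1) * exp (-t))) t := by
  have h := ((hasDerivAt_lagShift β n t).mul (hasDerivAt_rpow_const (p := β) (Or.inl ht.ne'))).mul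
    (hasDerivAt_neg t).exp
  refine h.congr_deriv ?_
  have ode := lagP_ode β n t
  have hpow : t ^ β = t * t ^ (β - 1) := by
    conv_lhs => rw [show β = 1 + (β - 1) by ring, rpow_add ht, rpow_one]
  simp only [Pi.mul_apply, hpow]
  linear_combination (t ^ (β - 1) * exp (-t)) * ode

lemma isBigO_pow_pow_atTop_of_le {R : Type*} [NormedRing R] [NormMulClass R] [Preorder R] [NoMaxOrder R]
    [IsOrderBornology R] {p q : ℕ} (h : p ≤ q) : (fun t : R => t ^ p) =O[atTop] fun t => t ^ q :=
  (isBigO_pow_pow_cobounded_of_le h).mono IsOrderBornology.atTop_le_cobounded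

lemma lagP_isBigO_pow (β : ℝ) (n : ℕ) : lagP β n =O[atTop] fun t => t ^ n := by
  induction n using Nat.twoStepInduction with
  | zero => exact (isBigO_refl (fun _ : ℝ => (1 : ℝ)) atTop).congr_right fun t => (pow_zero t).symm
  | one =>
    exact ((isBigO_refl id atTop).sub (isLittleO_const_id_atTop β).isBigO).congr_right
      fun t => (pow_one t).symm
  | more n ih₀ ih₁ =>
    have hlin : (fun t : ℝ => t - (2 * ((n : ℝ) + 1) + β)) =O[atTop] fun t => t :=
      (isBigO_refl id atTop).sub (isLittleO_const_id_atTop _).isBigO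
    have h := ((hlin.mul ih₁).congr_right fun t => (pow_succ' t (n + 1)).symm).sub
      ((ih₀.const_mul_left ((n : ℝ) + 1 + β - 1)).trans (isBigO_pow_pow_atTop_of_le (by omega)))
    refine (h.const_mul_left ((n : ℝ) + 2)⁻¹).congr_left fun t => ?_
    rw [lagP]
    ring

lemma lagShift_isBigO_pow (β : ℝ) (n : ℕ) : lagShift β n =O[atTop] fun t => t ^ n := by
  cases n with
  | zero => rw [lagShift_zero]; exact isBigO_zero _ _
  | succ n => simpa using (lagP_isBigO_pow (β + 1) n).trans (isBigO_pow_pow_atTop_of_le n.le_succ)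

noncomputable def lagWronskian (β : ℝ) (x y : ℕ) (t : ℝ) : ℝ :=
  lagP β x t * lagShift β y t - lagShift β x t * lagP β y t

lemma lagWronskian_isBigO_pow (β : ℝ) (x y : ℕ) :
    lagWronskian β x y =O[atTop] fun t => t ^ (x + y) :=
  (((lagP_isBigO_pow β x).mul (lagShift_isBigO_pow β y)).sub
    ((lagShift_isBigO_pow β x).mul (lagP_isBigO_pow β y))).congr_right fun t => (pow_add t x y).symm

lemma hasDerivAt_lagWronskian_mul_rpow_mul_exp (β : ℝ) (x y : ℕ) {t : ℝ} (ht : 0 < t) :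
    HasDerivAt (fun s => lagWronskian β x y s * s ^ β * exp (-s))
      ((x - y) * (lagP β x t * lagP β y t * t ^ (β - 1) * exp (-t))) t := by
  have h := ((hasDerivAt_lagP β x t).mul (hasDerivAt_lagShift_mul_rpow_mul_exp β y ht)).sub
    ((hasDerivAt_lagShift_mul_rpow_mul_exp β x ht).mul (hasDerivAt_lagP β y t))
  have hfun : (fun s => lagWronskian β x y s * s ^ β * exp (-s))
      = lagP β x * (fun s => lagShift β y s * s ^ β * exp (-s))
        - (fun s => lagShift β x s * s ^ β * exp (-s)) * lagP β y := by
    ext s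
    simp only [lagWronskian, Pi.mul_apply, Pi.sub_apply]
    ring
  rw [hfun]
  exact h.congr_deriv (by ring)

lemma isBigO_mul_rpow_mul_exp_neg {f : ℝ → ℝ} {k : ℕ} (hf : f =O[atTop] fun t => t ^ k) (s : ℝ) :
    (fun t => f t * t ^ s * exp (-t)) =O[atTop] fun t => exp (-(1 / 2) * t) := by
  have h := ((hf.trans (isLittleO_pow_exp_pos_mul_atTop k (b := 1 / 4) (by norm_num)).isBigO).mul
    (isLittleO_rpow_exp_pos_mul_atTop s (b := 1 / 4) (by norm_num)).isBigO).mul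
    (isBigO_refl (fun t => exp (-t)) atTop)
  refine h.congr_right fun t => ?_
  rw [← exp_add, ← exp_add]
  ring_nf

theorem laguerre_tail_integral_general (β : ℝ) (x y : ℕ) (hxy : x ≠ y)
    (r : ℝ) (hr : 0 < r) :
    ∫ t in Set.Ioi r, lagP β x t * lagP β y t * t ^ (β - 1) * Real.exp (-t)
      = r ^ β * Real.exp (-r) *
          (((if x = 0 then 0 else lagP (β + 1) (x - 1) r) * lagP β y r
            - lagP β x r * (if y = 0 then 0 else lagP (β + 1) (y - 1) r))
            / ((x : ℝ) - y)) := by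
  have hxy' : (x : ℝ) - y ≠ 0 := sub_ne_zero.2 (by exact_mod_cast hxy)
  have hcont : ContinuousOn (fun t => lagP β x t * lagP β y t * t ^ (β - 1) * exp (-t)) (Ici r) := by
    fun_prop (disch := exact fun t ht => (hr.trans_le ht).ne')
  have hint := integrable_of_isBigO_exp_neg (by norm_num) hcont <| isBigO_mul_rpow_mul_exp_neg
    (((lagP_isBigO_pow β x).mul (lagP_isBigO_pow β y)).congr_right fun t => (pow_add t x y).symm) _
  have hlim := (isBigO_mul_rpow_mul_exp_neg (lagWronskian_isBigO_pow β x y) β).trans_tendsto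
    (tendsto_exp_atBot.comp (tendsto_id.const_mul_atTop_of_neg (by norm_num)))
  have hftc := integral_Ioi_of_hasDerivAt_of_tendsto
    (hasDerivAt_lagWronskian_mul_rpow_mul_exp β x y hr).continuousAt.continuousWithinAt
    (fun t ht => hasDerivAt_lagWronskian_mul_rpow_mul_exp β x y (hr.trans ht))
    (hint.const_mul _) hlim
  simp only [integral_const_mul, lagWronskian] at hftc
  change _ = r ^ β * exp (-r) * ((lagShift β x r * lagP β y r - lagP β x r * lagShift β y r) / (x - y))
  field_simp
  linear_combination hftc

/-- For `x ≠ y` and `r > 0`,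
`∫_r^∞ L_x^{(β)} L_y^{(β)} t^{β−1}e^{−t} dt
  = r^β e^{−r} (L_{x−1}^{(β+1)}(r) L_y^{(β)}(r) − L_x^{(β)}(r) L_{y−1}^{(β+1)}(r))/(x−y)`,
with the convention `L_{−1}^{(β+1)} = 0`. -/
theorem laguerre_tail_integral (β : ℝ) (hβ : 0 < β) (x y : ℕ) (hxy : x ≠ y)
    (r : ℝ) (hr : 0 < r) :
    ∫ t in Set.Ioi r, lagP β x t * lagP β y t * t ^ (β - 1) * Real.exp (-t)
      = r ^ β * Real.exp (-r) *
          (((if x = 0 then 0 else lagP (β + 1) (x - 1) r) * lagP β y r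
            - lagP β x r * (if y = 0 then 0 else lagP (β + 1) (y - 1) r))
            / ((x : ℝ) - y)) :=
  laguerre_tail_integral_general β x y hxy r hr
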